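/- Finite-frequency performance condition for LPV systems with matrix-valued IQC (Lemma 5). Let n, p, q be positive integers and let A, B, C, D be continuous matrix-valued functions on [0,∞) with values in ℝ^{n×n}, ℝ^{n×p}, ℝ^{q×n}, ℝ^{q×p}. Let x : [0,∞) → ℝⁿ be continuously differentiable with x(0) = 0, let u : [0,∞) → ℝ^p be continuous, assume ẋ(t) = A(t)x(t) + B(t)u(t) for all t ≥ 0, and define y(t) = C(t)x(t) + D(t)u(t). Let Ψ_f ∈ ℝ^{2×2} be symmetric (a finite-frequency weight matrix, e.g. the low-frequency weight [[−1,0],[0,ϖ_l²]] or the high-frequency weight [[1,0],[0,−ϖ_h²]]), let Q ∈ ℝ^{n×n} be symmetric positive semidefinite, let Π ∈ ℝ^{(q+p)×(q+p)} be symmetric, and let P : [0,∞) → ℝ^{n×n} be differentiable with P(t) symmetric for every t. Assume: (i) for every t ≥ 0, [A(t) B(t); I 0]^T (Θ ⊗ P(t) + Θ_d ⊗ P'(t) + Ψ_f ⊗ Q) [A(t) B(t); I 0] + [C(t) D(t); 0 I]^T Π [C(t) D(t); 0 I] ⪯ 0; (ii) writing Z(t) for the n×2 matrix whose columns are ẋ(t)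 and x(t), the function t ↦ Z(t) Ψ_f Z(t)^T is integrable on [0,∞) and the n×n matrix ∫₀^∞ Z(t) Ψ_f Z(t)^T dt is positive semidefinite; (iii) t ↦ [y(t); u(t)]^T Π [y(t); u(t)] is integrable on [0,∞); (iv) lim_{T→∞} x(T)^T P(T) x(T) exists and is nonnegative. Then ∫₀^∞ [y(t); u(t)]^T Π [y(t); u(t)] dt ≤ 0. -/

import Mathlib

open Matrix MeasureTheory
open scoped Matrix.Norms.L2Operator

/-- `Ψ ⊗ Q`: the Kronecker product of a `2×2` real matrix with an `n×n` real matrix,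
realized as a `2n × 2n` block matrix. -/
noncomputable def kron2R {n : ℕ} (Ψ : Matrix (Fin 2) (Fin 2) ℝ)
    (Q : Matrix (Fin n) (Fin n) ℝ) : Matrix (Fin n ⊕ Fin n) (Fin n ⊕ Fin n) ℝ :=
  Matrix.fromBlocks (Ψ 0 0 • Q) (Ψ 0 1 • Q) (Ψ 1 0 • Q) (Ψ 1 1 • Q)

/-- The quadratic form `z ↦ zᵀ H z` over the reals. -/
noncomputable def qfR {m : Type*} [Fintype m] (H : Matrix m m ℝ) (z : m → ℝ) : ℝ :=
  dotProduct z (H.mulVec z)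

/-- The `n×2` matrix `Z(t)` whose columns are `ẋ(t)` and `x(t)`. -/
noncomputable def Zmat {n : ℕ} (xd xv : Fin n → ℝ) : Matrix (Fin n) (Fin 2) ℝ :=
  Matrix.of fun i j => ![xd i, xv i] j

/-! Along a trajectory, the LMI evaluated at `[x; u]` is a dissipation inequality: since
`[A B; I 0] [x; u] = [ẋ; x]`, the `Θ ⊗ P + Θ_d ⊗ P'` block gives `d/dt (xᵀ P x)`, the `Ψ_f ⊗ Q`
block gives `tr (Q Z Ψ_f Zᵀ)`, and the `Π` block gives the supply rate `[y; u]ᵀ Π [y; u]`.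
Integrating from `x(0) = 0` and letting `T → ∞`, the storage term tends to `L ≥ 0` and the IQC
term to `tr (Q ∫ Z Ψ_f Zᵀ) ≥ 0`, a trace of a product of positive semidefinite matrices. -/

open Set Filter Topology

section QuadraticForm

variable {m m' : Type*} [Fintype m] [Fintype m']

lemma qfR_add (H₁ H₂ : Matrix m m ℝ) (z : m → ℝ) :
    qfR (H₁ + H₂) z = qfR H₁ z + qfR H₂ z := by
  simp only [qfR, add_mulVec, dotProduct_add]

lemma qfR_transpose_mul_mul (M : Matrix m m' ℝ) (H : Matrix m m ℝ) (z : m' → ℝ) :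
    qfR (Mᵀ * H * M) z = qfR H (M *ᵥ z) := by
  simp only [qfR, ← mulVec_mulVec, dotProduct_mulVec (v := z), vecMul_transpose]

lemma qfR_nonpos_of_posSemidef_neg {H : Matrix m m ℝ} (hH : (-H).PosSemidef) (z : m → ℝ) :
    qfR H z ≤ 0 := by
  simpa [qfR, neg_mulVec] using hH.dotProduct_mulVec_nonneg z

lemma qfR_add_qfR_nonpos_of_posSemidef_neg {m₁ m₂ : Type*} [Fintype m₁] [Fintype m₂]
    {M : Matrix m₁ m ℝ} {N : Matrix m₂ m ℝ} {H : Matrix m₁ m₁ ℝ}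
    {Pi : Matrix m₂ m₂ ℝ} (h : (-(Mᵀ * H * M + Nᵀ * Pi * N)).PosSemidef) (z : m → ℝ) :
    qfR H (M *ᵥ z) + qfR Pi (N *ᵥ z) ≤ 0 := by
  rw [← qfR_transpose_mul_mul, ← qfR_transpose_mul_mul, ← qfR_add]
  exact qfR_nonpos_of_posSemidef_neg h z

end QuadraticForm

lemma qfR_kron2R {n : ℕ} (Ψ : Matrix (Fin 2) (Fin 2) ℝ) (Q : Matrix (Fin n) (Fin n) ℝ)
    (a b : Fin n → ℝ) :
    qfR (kron2R Ψ Q) (Sum.elim a b) =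
      Ψ 0 0 * (a ⬝ᵥ Q *ᵥ a) + Ψ 0 1 * (a ⬝ᵥ Q *ᵥ b) +
      Ψ 1 0 * (b ⬝ᵥ Q *ᵥ a) + Ψ 1 1 * (b ⬝ᵥ Q *ᵥ b) := by
  simp only [qfR, kron2R, fromBlocks_mulVec, sumElim_dotProduct_sumElim, Sum.elim_comp_inl,
    Sum.elim_comp_inr, smul_mulVec, dotProduct_add, dotProduct_smul, smul_eq_mul]
  ring

lemma transpose_Zmat_mul_mul_Zmat {n : ℕ} (Q : Matrix (Fin n) (Fin n) ℝ) (a b : Fin n → ℝ) :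
    (Zmat a b)ᵀ * Q * Zmat a b = !![a ⬝ᵥ Q *ᵥ a, a ⬝ᵥ Q *ᵥ b; b ⬝ᵥ Q *ᵥ a, b ⬝ᵥ Q *ᵥ b] := by
  ext i j
  fin_cases i <;> fin_cases j <;>
    simp only [Zmat, Nat.succ_eq_add_one, Nat.reduceAdd, Fin.isValue, Fin.zero_eta, Fin.mk_one,
      mul_apply, transpose_apply, of_apply, cons_val_zero, cons_val_one, cons_val_fin_one,
      cons_val', dotProduct, mulVec, Finset.sum_mul, Finset.mul_sum] <;>
    rw [Finset.sum_comm] <;> simp only [mul_comm, mul_left_comm]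

lemma qfR_kron2R_eq_trace {n : ℕ} (Ψ : Matrix (Fin 2) (Fin 2) ℝ) (Q : Matrix (Fin n) (Fin n) ℝ)
    (a b : Fin n → ℝ) :
    qfR (kron2R Ψ Q) (Sum.elim a b) = (Q * (Zmat a b * Ψᵀ * (Zmat a b)ᵀ)).trace := by
  rw [← Matrix.mul_assoc, ← Matrix.mul_assoc, trace_mul_comm, ← Matrix.mul_assoc,
    ← Matrix.mul_assoc, transpose_Zmat_mul_mul_Zmat, qfR_kron2R]
  simp only [Fin.isValue, dotProduct, trace, cons_mul, Nat.succ_eq_add_one, Nat.reduceAdd,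
    Matrix.empty_mul, Equiv.symm_apply_apply, diag_apply, of_apply, cons_val', vecMul,
    transpose_apply, Fin.sum_univ_two, cons_val_zero, cons_val_one, cons_val_fin_one]
  ring

lemma qfR_kron2R_storage {n : ℕ} (P P' : Matrix (Fin n) (Fin n) ℝ) (a b : Fin n → ℝ) :
    qfR (kron2R !![0,1;1,0] P + kron2R !![0,0;0,1] P') (Sum.elim a b) =
      a ⬝ᵥ P *ᵥ b + b ⬝ᵥ P' *ᵥ b + b ⬝ᵥ P *ᵥ a := by
  simp only [qfR_add, qfR_kron2R, of_apply, cons_val', cons_val_zero, cons_val_one,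
    empty_val', cons_val_fin_one]
  ring

lemma LinearMap.hasDerivAt_of_bilinear_of_finiteDimensional {E F G : Type*}
    [NormedAddCommGroup E] [NormedSpace ℝ E] [FiniteDimensional ℝ E]
    [NormedAddCommGroup F] [NormedSpace ℝ F] [FiniteDimensional ℝ F]
    [NormedAddCommGroup G] [NormedSpace ℝ G]
    (B : E →ₗ[ℝ] F →ₗ[ℝ] G) {u : ℝ → E} {v : ℝ → F} {u' : E} {v' : F} {t : ℝ}
    (hu : HasDerivAt u u' t) (hv : HasDerivAt v v' t) :
    HasDerivAt (fun s => B (u s) (v s)) (B (u t) v' + B u' (v t)) t :=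
  (LinearMap.toContinuousLinearMap.toLinearMap ∘ₗ B).toContinuousLinearMap.hasDerivAt_of_bilinear
    (fun _ => hu) (fun _ => hv)

lemma hasDerivAt_qfR {m : Type*} [Fintype m] [DecidableEq m] {P : ℝ → Matrix m m ℝ}
    {P' : Matrix m m ℝ} {x : ℝ → m → ℝ} {x' : m → ℝ} {t : ℝ}
    (hP : HasDerivAt P P' t) (hx : HasDerivAt x x' t) :
    HasDerivAt (fun s => qfR (P s) (x s))
      (x' ⬝ᵥ P t *ᵥ x t + x t ⬝ᵥ P' *ᵥ x t + x t ⬝ᵥ P t *ᵥ x') t := by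
  have hPx := (mulVecBilin ℝ ℝ).hasDerivAt_of_bilinear_of_finiteDimensional hP hx
  have := (dotProductBilin ℝ ℝ).hasDerivAt_of_bilinear_of_finiteDimensional hx hPx
  refine this.congr_deriv ?_
  simp only [mulVecBilin_apply, dotProductBilin_apply_apply, dotProduct_add]
  ring

lemma hasDerivAt_qfR_kron2R {n : ℕ} {P : ℝ → Matrix (Fin n) (Fin n) ℝ}
    {P' : Matrix (Fin n) (Fin n) ℝ} {x : ℝ → Fin n → ℝ} {x' : Fin n → ℝ} {t : ℝ}
    (hP : HasDerivAt P P' t) (hx : HasDerivAt x x' t) :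
    HasDerivAt (fun s => qfR (P s) (x s))
      (qfR (kron2R !![0,1;1,0] (P t) + kron2R !![0,0;0,1] P') (Sum.elim x' (x t))) t := by
  rw [qfR_kron2R_storage]
  exact hasDerivAt_qfR hP hx

lemma qfR_kron2R_add_qfR_nonpos_of_LMI {n p q : ℕ} {A : Matrix (Fin n) (Fin n) ℝ}
    {B : Matrix (Fin n) (Fin p) ℝ} {C : Matrix (Fin q) (Fin n) ℝ} {D : Matrix (Fin q) (Fin p) ℝ}
    {P P' Q : Matrix (Fin n) (Fin n) ℝ} {Ψ : Matrix (Fin 2) (Fin 2) ℝ}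
    {Pi : Matrix (Fin q ⊕ Fin p) (Fin q ⊕ Fin p) ℝ}
    (hLMI : PosSemidef (-((fromBlocks A B (1 : Matrix (Fin n) (Fin n) ℝ) 0)ᵀ *
      (kron2R !![0,1;1,0] P + kron2R !![0,0;0,1] P' + kron2R Ψ Q) * fromBlocks A B 1 0 +
      (fromBlocks C D 0 (1 : Matrix (Fin p) (Fin p) ℝ))ᵀ * Pi * fromBlocks C D 0 1)))
    {x x' : Fin n → ℝ} {u : Fin p → ℝ} {y : Fin q → ℝ}
    (hx' : x' = A *ᵥ x + B *ᵥ u) (hy : y = C *ᵥ x + D *ᵥ u) :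
    qfR (kron2R !![0,1;1,0] P + kron2R !![0,0;0,1] P') (Sum.elim x' x) +
      (qfR (kron2R Ψ Q) (Sum.elim x' x) + qfR Pi (Sum.elim y u)) ≤ 0 := by
  have := qfR_add_qfR_nonpos_of_posSemidef_neg hLMI (Sum.elim x u)
  simp only [fromBlocks_mulVec, Sum.elim_comp_inl, Sum.elim_comp_inr, one_mulVec, zero_mulVec,
    add_zero, zero_add, ← hx', ← hy, qfR_add _ (kron2R Ψ Q)] at this
  linarith

lemma integral_Ioi_le_sub_of_hasDerivAt_add_nonpos {V V' w : ℝ → ℝ} {a L : ℝ}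
    (hV : ∀ t ∈ Ici a, HasDerivAt V (V' t) t) (hw : IntegrableOn w (Ioi a))
    (hdiss : ∀ t ∈ Ioi a, V' t + w t ≤ 0) (hlim : Tendsto V atTop (𝓝 L)) :
    ∫ t in Ioi a, w t ≤ V a - L := by
  have hfinite : ∀ T ∈ Ici a, ∫ t in a..T, w t ≤ V a - V T := fun T hT => by
    have := intervalIntegral.sub_le_integral_of_hasDeriv_right_of_le (φ := fun t => -w t) hT
      (fun t ht => (hV t ht.1).continuousAt.continuousWithinAt)
      (fun t ht => (hV t (mem_Ici.2 ht.1.le)).hasDerivWithinAt)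
      (hw.mono_set Ioc_subset_Ioi_self |>.congr_set_ae Ioc_ae_eq_Icc.symm |>.neg)
      (fun t ht => by linarith [hdiss t ht.1])
    rw [intervalIntegral.integral_neg] at this
    linarith
  refine le_of_tendsto_of_tendsto (intervalIntegral_tendsto_integral_Ioi a hw tendsto_id)
    (tendsto_const_nhds.sub hlim) ?_
  filter_upwards [eventually_ge_atTop a] with T hT using hfinite T hT

section TraceMul

variable {m : Type*} [Fintype m] [DecidableEq m]

open scoped MatrixOrder in
lemma trace_mul_nonneg_of_posSemidef {Q M : Matrix m m ℝ} (hQ : Q.PosSemidef)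
    (hM : M.PosSemidef) : 0 ≤ (Q * M).trace := by
  have hsqrt : (CFC.sqrt Q)ᴴ = CFC.sqrt Q := (CFC.sqrt_nonneg Q).posSemidef.isHermitian
  have hconj : (CFC.sqrt Q * M * CFC.sqrt Q).trace = (Q * M).trace := by
    rw [trace_mul_comm, ← Matrix.mul_assoc, CFC.sqrt_mul_sqrt_self Q hQ.nonneg]
  rw [← hconj]
  simpa only [hsqrt] using (hM.conjTranspose_mul_mul_same (CFC.sqrt Q)).trace_nonneg

variable {α : Type*} [MeasurableSpace α] {μ : Measure α} {f : α → Matrix m m ℝ}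

lemma integrable_trace_mul (Q : Matrix m m ℝ) (hf : Integrable f μ) :
    Integrable (fun a => (Q * f a).trace) μ :=
  (traceLinearMap m ℝ ℝ ∘ₗ LinearMap.mulLeft ℝ Q).toContinuousLinearMap.integrable_comp hf

lemma integral_trace_mul (Q : Matrix m m ℝ) (hf : Integrable f μ) :
    ∫ a, (Q * f a).trace ∂μ = (Q * ∫ a, f a ∂μ).trace :=
  (traceLinearMap m ℝ ℝ ∘ₗ LinearMap.mulLeft ℝ Q).toContinuousLinearMap.integral_comp_comm hf

end TraceMul

theorem finite_frequency_performance_LPV_matrix_IQC_general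
    {n p q : ℕ}
    (A : ℝ → Matrix (Fin n) (Fin n) ℝ) (B : ℝ → Matrix (Fin n) (Fin p) ℝ)
    (C : ℝ → Matrix (Fin q) (Fin n) ℝ) (D : ℝ → Matrix (Fin q) (Fin p) ℝ)
    (x : ℝ → Fin n → ℝ) (x' : ℝ → Fin n → ℝ)
    (hx : ∀ t ∈ Set.Ici (0:ℝ), HasDerivAt x (x' t) t)
    (hx0 : x 0 = 0)
    (u : ℝ → Fin p → ℝ)
    (hode : ∀ t ∈ Set.Ici (0:ℝ), x' t = (A t).mulVec (x t) + (B t).mulVec (u t))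
    (y : ℝ → Fin q → ℝ)
    (hy : ∀ t ∈ Set.Ici (0:ℝ), y t = (C t).mulVec (x t) + (D t).mulVec (u t))
    (Ψf : Matrix (Fin 2) (Fin 2) ℝ) (hΨf : Ψf.IsSymm)
    (Q : Matrix (Fin n) (Fin n) ℝ) (hQ : Q.PosSemidef)
    (Pi : Matrix (Fin q ⊕ Fin p) (Fin q ⊕ Fin p) ℝ)
    (P P' : ℝ → Matrix (Fin n) (Fin n) ℝ)
    (hP : ∀ t ∈ Set.Ici (0:ℝ), HasDerivAt P (P' t) t)
    -- (i) the pointwise LMI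
    (hLMI : ∀ t ∈ Set.Ici (0:ℝ),
      Matrix.PosSemidef
        (-((Matrix.fromBlocks (A t) (B t) (1 : Matrix (Fin n) (Fin n) ℝ) 0)ᵀ *
              (kron2R !![0,1;1,0] (P t) + kron2R !![0,0;0,1] (P' t) + kron2R Ψf Q) *
              Matrix.fromBlocks (A t) (B t) (1 : Matrix (Fin n) (Fin n) ℝ) 0 +
            (Matrix.fromBlocks (C t) (D t) 0 (1 : Matrix (Fin p) (Fin p) ℝ))ᵀ * Pi *
              Matrix.fromBlocks (C t) (D t) 0 (1 : Matrix (Fin p) (Fin p) ℝ))))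
    -- (ii) the matrix-valued IQC
    (hIQCint : IntegrableOn
      (fun t => Zmat (x' t) (x t) * Ψf * (Zmat (x' t) (x t))ᵀ) (Set.Ioi 0))
    (hIQC : Matrix.PosSemidef
      (∫ t in Set.Ioi (0:ℝ), Zmat (x' t) (x t) * Ψf * (Zmat (x' t) (x t))ᵀ))
    -- (iii) integrability of the performance integrand
    (hPerfInt : IntegrableOn (fun t => qfR Pi (Sum.elim (y t) (u t))) (Set.Ioi 0))
    -- (iv) the storage function has a nonnegative limit
    (hlim : ∃ L : ℝ, 0 ≤ L ∧
      Filter.Tendsto (fun T => qfR (P T) (x T)) Filter.atTop (nhds L)) :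
    ∫ t in Set.Ioi (0:ℝ), qfR Pi (Sum.elim (y t) (u t)) ≤ 0 := by
  obtain ⟨L, hL, hV⟩ := hlim
  have hIQCterm : ∀ t, qfR (kron2R Ψf Q) (Sum.elim (x' t) (x t)) =
      (Q * (Zmat (x' t) (x t) * Ψf * (Zmat (x' t) (x t))ᵀ)).trace := fun t => by
    rw [qfR_kron2R_eq_trace, hΨf.eq]
  have hIQCterm_int : IntegrableOn (fun t => qfR (kron2R Ψf Q) (Sum.elim (x' t) (x t)))
      (Ioi 0) := by
    simp only [IntegrableOn, hIQCterm]
    exact integrable_trace_mul Q hIQCint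
  have hIQCterm_nonneg : 0 ≤ ∫ t in Ioi 0, qfR (kron2R Ψf Q) (Sum.elim (x' t) (x t)) := by
    simpa only [hIQCterm, integral_trace_mul Q hIQCint] using
      trace_mul_nonneg_of_posSemidef hQ hIQC
  have hbound := integral_Ioi_le_sub_of_hasDerivAt_add_nonpos
    (fun t ht => hasDerivAt_qfR_kron2R (hP t ht) (hx t ht))
    (hIQCterm_int.add hPerfInt)
    (fun t ht => qfR_kron2R_add_qfR_nonpos_of_LMI (hLMI t (mem_Ici_of_Ioi ht))
      (hode t (mem_Ici_of_Ioi ht)) (hy t (mem_Ici_of_Ioi ht))) hV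
  have hV0 : qfR (P 0) (x 0) = 0 := by simp only [qfR, hx0, mulVec_zero, dotProduct_zero]
  simp only [_root_.Pi.add_apply] at hbound
  rw [integral_add hIQCterm_int hPerfInt, hV0] at hbound
  linarith

/-- Finite-frequency performance condition for LPV systems with matrix-valued IQC
(Lemma 5). -/
theorem finite_frequency_performance_LPV_matrix_IQC
    {n p q : ℕ} (hn : 0 < n) (hp : 0 < p) (hq : 0 < q)
    (A : ℝ → Matrix (Fin n) (Fin n) ℝ) (B : ℝ → Matrix (Fin n) (Fin p) ℝ)
    (C : ℝ → Matrix (Fin q) (Fin n) ℝ) (D : ℝ → Matrix (Fin q) (Fin p) ℝ)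
    (hA : ContinuousOn A (Set.Ici 0)) (hB : ContinuousOn B (Set.Ici 0))
    (hC : ContinuousOn C (Set.Ici 0)) (hD : ContinuousOn D (Set.Ici 0))
    (x : ℝ → Fin n → ℝ) (x' : ℝ → Fin n → ℝ)
    (hx : ∀ t ∈ Set.Ici (0:ℝ), HasDerivAt x (x' t) t)
    (hx'c : ContinuousOn x' (Set.Ici 0))
    (hx0 : x 0 = 0)
    (u : ℝ → Fin p → ℝ) (hu : ContinuousOn u (Set.Ici 0))
    (hode : ∀ t ∈ Set.Ici (0:ℝ), x' t = (A t).mulVec (x t) + (B t).mulVec (u t))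
    (y : ℝ → Fin q → ℝ)
    (hy : ∀ t ∈ Set.Ici (0:ℝ), y t = (C t).mulVec (x t) + (D t).mulVec (u t))
    (Ψf : Matrix (Fin 2) (Fin 2) ℝ) (hΨf : Ψf.IsSymm)
    (Q : Matrix (Fin n) (Fin n) ℝ) (hQ : Q.PosSemidef)
    (Pi : Matrix (Fin q ⊕ Fin p) (Fin q ⊕ Fin p) ℝ) (hPi : Pi.IsSymm)
    (P P' : ℝ → Matrix (Fin n) (Fin n) ℝ)
    (hP : ∀ t ∈ Set.Ici (0:ℝ), HasDerivAt P (P' t) t)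
    (hPsymm : ∀ t ∈ Set.Ici (0:ℝ), (P t).IsSymm)
    -- (i) the pointwise LMI
    (hLMI : ∀ t ∈ Set.Ici (0:ℝ),
      Matrix.PosSemidef
        (-((Matrix.fromBlocks (A t) (B t) (1 : Matrix (Fin n) (Fin n) ℝ) 0)ᵀ *
              (kron2R !![0,1;1,0] (P t) + kron2R !![0,0;0,1] (P' t) + kron2R Ψf Q) *
              Matrix.fromBlocks (A t) (B t) (1 : Matrix (Fin n) (Fin n) ℝ) 0 +
            (Matrix.fromBlocks (C t) (D t) 0 (1 : Matrix (Fin p) (Fin p) ℝ))ᵀ * Pi *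
              Matrix.fromBlocks (C t) (D t) 0 (1 : Matrix (Fin p) (Fin p) ℝ))))
    -- (ii) the matrix-valued IQC
    (hIQCint : IntegrableOn
      (fun t => Zmat (x' t) (x t) * Ψf * (Zmat (x' t) (x t))ᵀ) (Set.Ioi 0))
    (hIQC : Matrix.PosSemidef
      (∫ t in Set.Ioi (0:ℝ), Zmat (x' t) (x t) * Ψf * (Zmat (x' t) (x t))ᵀ))
    -- (iii) integrability of the performance integrand
    (hPerfInt : IntegrableOn (fun t => qfR Pi (Sum.elim (y t) (u t))) (Set.Ioi 0))
    -- (iv) the storage function has a nonnegative limit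
    (hlim : ∃ L : ℝ, 0 ≤ L ∧
      Filter.Tendsto (fun T => qfR (P T) (x T)) Filter.atTop (nhds L)) :
    ∫ t in Set.Ioi (0:ℝ), qfR Pi (Sum.elim (y t) (u t)) ≤ 0 :=
  finite_frequency_performance_LPV_matrix_IQC_general A B C D x x' hx hx0 u hode y hy Ψf hΨf Q hQ Pi
    P P' hP hLMI hIQCint hIQC hPerfInt hlim
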